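/- Decidability of END: the set of modal formulas derivable in the logic END is decidable, i.e., the predicate 'A is derivable in END' on modal formulas is a decidable predicate. -/

import Mathlib

/-- Modal formulas: propositional variables, ⊥, ¬, ∧, ∨, →, □. -/
inductive MF : Type
  | var : ℕ → MF
  | bot : MF
  | neg : MF → MF
  | and : MF → MF → MF
  | or : MF → MF → MF
  | imp : MF → MF → MF
  | box : MF → MF

/-- Defined biconditional A ↔ B := (A → B) ∧ (B → A). -/
def MF.iff (A B : MF) : MF := (A.imp B).and (B.imp A)

/-- Propositional evaluation: variables and boxed formulas are treated as atoms. -/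
def MF.peval (v : MF → Bool) : MF → Bool
  | .var n => v (.var n)
  | .bot => false
  | .neg A => !(A.peval v)
  | .and A B => A.peval v && B.peval v
  | .or A B => A.peval v || B.peval v
  | .imp A B => !(A.peval v) || B.peval v
  | .box A => v A.box

/-- A is a propositional tautology. -/
def MF.Tautology (A : MF) : Prop := ∀ v : MF → Bool, A.peval v = true

/-- The logic END: EN plus the axiom scheme ¬(□A ∧ □¬A). -/
inductive END : MF → Prop
  | taut {A : MF} : A.Tautology → END A
  | axD {A : MF} : END (A.box.and A.neg.box).neg
  | mp {A B : MF} : END (A.imp B) → END A → END B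
  | nec {A : MF} : END A → END A.box
  | re {A B : MF} : END (A.iff B) → END (A.box.iff B.box)

/-- An injective Gödel numbering of modal formulas, via the pairing function. -/
def encodeMF : MF → ℕ
  | .var n => Nat.pair 0 n
  | .bot => Nat.pair 1 0
  | .neg A => Nat.pair 2 (encodeMF A)
  | .and A B => Nat.pair 3 (Nat.pair (encodeMF A) (encodeMF B))
  | .or A B => Nat.pair 4 (Nat.pair (encodeMF A) (encodeMF B))
  | .imp A B => Nat.pair 5 (Nat.pair (encodeMF A) (encodeMF B))
  | .box A => Nat.pair 6 (encodeMF A)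


/-!
Whether `⊢ A` holds depends on provability only through the boxes `□B` of `A` that lie
outside any other box (`B ∈ A.boxArgs`): `A` is provable iff it is a propositional tautology
under the hypotheses `□B`, `¬□B`, `□B ↔ □C`, `¬(□B ∧ □C)` (for `B, C ∈ A.boxArgs`) whose
premises `B`, `¬B`, `B ↔ C`, `B ↔ ¬C` are provable. Those hypotheses are derivable by N, D and
RE. Conversely a valuation satisfying them extends to all boxes, making `□B` true iff `B` is
provable or provably equivalent to some `C ∈ A.boxArgs` with `□C` true; this extension respects
RE, N and D, and END is sound for such valuations.

All premises have smaller modal depth than `A`, so provability is computed by well-founded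
recursion on modal depth, which is primitive recursive by `Primrec.nat_omega_rec'`.
-/

theorem lt_pair_of_pos {k : ℕ} (hk : 0 < k) (x : ℕ) : x < Nat.pair k x :=
  lt_of_lt_of_le (by omega) (Nat.add_le_pair k x)

theorem left_lt_pair_pair {k : ℕ} (hk : 0 < k) (a b : ℕ) : a < Nat.pair k (Nat.pair a b) :=
  (Nat.left_le_pair a b).trans_lt (lt_pair_of_pos hk _)

theorem right_lt_pair_pair {k : ℕ} (hk : 0 < k) (a b : ℕ) : b < Nat.pair k (Nat.pair a b) :=
  (Nat.right_le_pair a b).trans_lt (lt_pair_of_pos hk _)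

theorem List.getD_map_range_none {σ : Type*} (F : ℕ → Option σ) (n m : ℕ) :
    ((List.range n).map F).getD m none = if m < n then F m else none := by
  split_ifs with h <;> simp [List.getD_eq_getElem?_getD, h]

theorem List.getD_map_idxOf {α β : Type*} [DecidableEq α] (f : α → β) {l : List α} {a : α}
    (h : a ∈ l) (d : β) : (l.map f).getD (l.idxOf a) d = f a := by
  simp [List.getD_eq_getElem?_getD, List.getElem?_idxOf h]

theorem Primrec.list_sublists {β : Type*} [Primcodable β] :
    Primrec (List.sublists : List β → List (List β)) :=
  Primrec.list_foldr .id (.const [[]]) <| Primrec.to₂ <|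
    Primrec.list_flatMap (Primrec.snd.comp .snd) <| Primrec.to₂ <|
      Primrec.list_cons.comp .snd <| Primrec.list_cons.comp (Primrec.list_cons.comp
        (Primrec.fst.comp (Primrec.snd.comp .fst)) .snd) (.const [])

theorem PrimrecRel.mem {β : Type*} [Primcodable β] [DecidableEq β] :
    PrimrecRel fun (b : β) (l : List β) => b ∈ l :=
  PrimrecRel.of_eq (r := fun b l => ∃ a ∈ l, a = b)
    ((PrimrecRel.exists_mem_list Primrec.eq).comp .snd .fst) fun _ _ => by simp

/-! ### Structural recursion on Gödel numbers -/

namespace MF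

/-- An algebra for the signature of `MF` whose `box` also sees the Gödel number of its
argument, so that `fold` can be computed on codes before `MF` is known to be `Primcodable`. -/
structure Alg (σ : Type*) where
  var : ℕ → σ
  bot : σ
  neg : σ → σ
  and : σ → σ → σ
  or : σ → σ → σ
  imp : σ → σ → σ
  box : ℕ → σ → σ

variable {σ : Type*}

def fold (f : Alg σ) : MF → σ
  | var n => f.var n
  | bot => f.bot
  | neg A => f.neg (fold f A)
  | and A B => f.and (fold f A) (fold f B)
  | or A B => f.or (fold f A) (fold f B)
  | imp A B => f.imp (fold f A) (fold f B)
  | box A => f.box (encodeMF A) (fold f A)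

def foldStep (f : Alg σ) (rec : ℕ → Option σ) (n : ℕ) : Option σ :=
  let t := n.unpair.1
  let r := n.unpair.2
  if t = 0 then some (f.var r)
  else if t = 1 then (if r = 0 then some f.bot else none)
  else if t = 2 then (rec r).map f.neg
  else if t = 3 then Option.map₂ f.and (rec r.unpair.1) (rec r.unpair.2)
  else if t = 4 then Option.map₂ f.or (rec r.unpair.1) (rec r.unpair.2)
  else if t = 5 then Option.map₂ f.imp (rec r.unpair.1) (rec r.unpair.2)
  else if t = 6 then (rec r).map (f.box r)
  else none

/-- `fold f` computed on Gödel numbers; `none` on non-codes. -/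
def foldCode (f : Alg σ) (n : ℕ) : Option σ :=
  foldStep f (fun m => if _ : m < n then foldCode f m else none) n

theorem foldCode_eq (f : Alg σ) (n : ℕ) :
    foldCode f n = foldStep f (fun m => if m < n then foldCode f m else none) n := by
  rw [foldCode]; simp only [dite_eq_ite]

theorem foldCode_encodeMF (f : Alg σ) (A : MF) : foldCode f (encodeMF A) = some (fold f A) := by
  induction A <;> rw [foldCode_eq] <;>
    simp_all [foldStep, encodeMF, fold, Option.map₂, lt_pair_of_pos, left_lt_pair_pair,
      right_lt_pair_pair]

theorem exists_of_foldCode_eq_some (f : Alg σ) {n : ℕ} {s : σ} (h : foldCode f n = some s) :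
    ∃ A, encodeMF A = n ∧ fold f A = s := by
  induction n using Nat.strong_induction_on generalizing s with
  | _ n ih =>
  rw [foldCode_eq] at h
  generalize hrec : (fun m => if m < n then foldCode f m else none) = rec at h
  have rec_some : ∀ {m x}, rec m = some x → ∃ A, encodeMF A = m ∧ fold f A = x := by
    intro m x hm
    subst hrec
    dsimp only at hm
    split_ifs at hm with hlt
    exact ih _ hlt hm
  have hn := Nat.pair_unpair n
  have hr := Nat.pair_unpair n.unpair.2
  simp only [foldStep] at h
  split_ifs at h with h0 h1 h1' h2 h3 h4 h5 h6
  · exact ⟨var n.unpair.2, by simp [encodeMF, ← h0, hn], by simpa [fold] using h⟩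
  · exact ⟨bot, by simp [encodeMF, ← h1, ← h1', hn], by simpa [fold] using h⟩
  · obtain ⟨x, hx, rfl⟩ := Option.map_eq_some_iff.1 h
    obtain ⟨A, hA, rfl⟩ := rec_some hx
    exact ⟨neg A, by simp [encodeMF, hA, ← h2, hn], rfl⟩
  · obtain ⟨x, y, hx, hy, rfl⟩ := Option.map₂_eq_some_iff.1 h
    obtain ⟨A, hA, rfl⟩ := rec_some hx
    obtain ⟨B, hB, rfl⟩ := rec_some hy
    exact ⟨and A B, by simp [encodeMF, hA, hB, hr, ← h3, hn], rfl⟩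
  · obtain ⟨x, y, hx, hy, rfl⟩ := Option.map₂_eq_some_iff.1 h
    obtain ⟨A, hA, rfl⟩ := rec_some hx
    obtain ⟨B, hB, rfl⟩ := rec_some hy
    exact ⟨or A B, by simp [encodeMF, hA, hB, hr, ← h4, hn], rfl⟩
  · obtain ⟨x, y, hx, hy, rfl⟩ := Option.map₂_eq_some_iff.1 h
    obtain ⟨A, hA, rfl⟩ := rec_some hx
    obtain ⟨B, hB, rfl⟩ := rec_some hy
    exact ⟨imp A B, by simp [encodeMF, hA, hB, hr, ← h5, hn], rfl⟩
  · obtain ⟨x, hx, rfl⟩ := Option.map_eq_some_iff.1 h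
    obtain ⟨A, hA, rfl⟩ := rec_some hx
    exact ⟨box A, by simp [encodeMF, hA, ← h6, hn], by simp [fold, hA]⟩

theorem primrec_foldStep {α : Type*} [Primcodable α] [Primcodable σ] {f : α → Alg σ}
    (hvar : Primrec₂ fun a => (f a).var) (hbot : Primrec fun a => (f a).bot)
    (hneg : Primrec₂ fun a => (f a).neg)
    (hand : Primrec fun p : α × σ × σ => (f p.1).and p.2.1 p.2.2)
    (hor : Primrec fun p : α × σ × σ => (f p.1).or p.2.1 p.2.2)
    (himp : Primrec fun p : α × σ × σ => (f p.1).imp p.2.1 p.2.2)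
    (hbox : Primrec fun p : α × ℕ × σ => (f p.1).box p.2.1 p.2.2) :
    Primrec₂ fun a (l : List (Option σ)) => foldStep (f a) (fun m => l.getD m none) l.length := by
  have ht : Primrec fun p : α × List (Option σ) => p.2.length.unpair.1 :=
    Primrec.fst.comp (Primrec.unpair.comp (Primrec.list_length.comp .snd))
  have hr : Primrec fun p : α × List (Option σ) => p.2.length.unpair.2 :=
    Primrec.snd.comp (Primrec.unpair.comp (Primrec.list_length.comp .snd))
  have hrec : ∀ {i : α × List (Option σ) → ℕ}, Primrec i →
      Primrec fun p : α × List (Option σ) => p.2.getD (i p) none :=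
    fun hi => (Primrec.list_getD none).comp .snd hi
  have hbin : ∀ {op : α → σ → σ → σ}, Primrec (fun p : α × σ × σ => op p.1 p.2.1 p.2.2) →
      Primrec fun p : α × List (Option σ) => Option.map₂ (op p.1)
        (p.2.getD p.2.length.unpair.2.unpair.1 none)
        (p.2.getD p.2.length.unpair.2.unpair.2 none) :=
    fun hop => Primrec.option_bind (hrec (Primrec.fst.comp (Primrec.unpair.comp hr)))
      (Primrec.option_map ((hrec (Primrec.snd.comp (Primrec.unpair.comp hr))).comp .fst)
        (hop.comp (Primrec.pair (Primrec.fst.comp (Primrec.fst.comp .fst))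
          (Primrec.pair (Primrec.snd.comp .fst) .snd))).to₂).to₂
  have htag : ∀ k, PrimrecPred fun p : α × List (Option σ) => p.2.length.unpair.1 = k :=
    fun k => Primrec.eq.comp ht (.const k)
  refine Primrec.ite (htag 0) (Primrec.option_some.comp (hvar.comp .fst hr)) ?_
  refine Primrec.ite (htag 1)
    (Primrec.ite (Primrec.eq.comp hr (.const 0)) (Primrec.option_some.comp (hbot.comp .fst))
      (.const none)) ?_
  refine Primrec.ite (htag 2)
    (Primrec.option_map (hrec hr) (hneg.comp (Primrec.fst.comp .fst) .snd)) ?_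
  refine Primrec.ite (htag 3) (hbin (op := fun a => (f a).and) hand) ?_
  refine Primrec.ite (htag 4) (hbin (op := fun a => (f a).or) hor) ?_
  refine Primrec.ite (htag 5) (hbin (op := fun a => (f a).imp) himp) ?_
  exact Primrec.ite (htag 6) (Primrec.option_map (hrec hr)
    (hbox.comp (Primrec.pair (Primrec.fst.comp .fst) (Primrec.pair (hr.comp .fst) .snd))).to₂)
    (.const none)

theorem primrec_foldCode {α : Type*} [Primcodable α] [Primcodable σ] {f : α → Alg σ}
    (hvar : Primrec₂ fun a => (f a).var) (hbot : Primrec fun a => (f a).bot)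
    (hneg : Primrec₂ fun a => (f a).neg)
    (hand : Primrec fun p : α × σ × σ => (f p.1).and p.2.1 p.2.2)
    (hor : Primrec fun p : α × σ × σ => (f p.1).or p.2.1 p.2.2)
    (himp : Primrec fun p : α × σ × σ => (f p.1).imp p.2.1 p.2.2)
    (hbox : Primrec fun p : α × ℕ × σ => (f p.1).box p.2.1 p.2.2) :
    Primrec₂ fun a => foldCode (f a) :=
  Primrec.nat_strong_rec _
    (Primrec.option_some.comp (primrec_foldStep hvar hbot hneg hand hor himp hbox)).to₂
    fun a n => by
      simp only [List.length_map, List.length_range, List.getD_map_range_none]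
      rw [foldCode_eq]

def termAlg : Alg MF := ⟨var, bot, neg, and, or, imp, fun _ => box⟩

theorem fold_termAlg (A : MF) : fold termAlg A = A := by
  induction A <;> simp_all [fold, termAlg]

end MF

open MF

def decodeMF : ℕ → Option MF := foldCode termAlg

theorem decodeMF_encodeMF (A : MF) : decodeMF (encodeMF A) = some A := by
  simp [decodeMF, foldCode_encodeMF, fold_termAlg]

theorem encodeMF_injective : Function.Injective encodeMF := fun A B h =>
  Option.some.inj (by rw [← decodeMF_encodeMF, h, decodeMF_encodeMF])

theorem encodeMF_of_decodeMF_eq_some {n : ℕ} {A : MF} (h : decodeMF n = some A) :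
    encodeMF A = n := by
  obtain ⟨B, rfl, hB⟩ := exists_of_foldCode_eq_some termAlg h
  rw [← hB, fold_termAlg]

theorem MF.foldCode_eq_map_decodeMF {σ : Type*} (f : Alg σ) (n : ℕ) :
    foldCode f n = (decodeMF n).map (fold f) := by
  cases h : decodeMF n with
  | some A => rw [← encodeMF_of_decodeMF_eq_some h, foldCode_encodeMF]; rfl
  | none =>
    refine Option.eq_none_iff_forall_ne_some.2 fun s hs => ?_
    obtain ⟨A, rfl, -⟩ := exists_of_foldCode_eq_some f hs
    simp [decodeMF_encodeMF] at h

instance : DecidableEq MF := encodeMF_injective.decidableEq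

instance : Encodable MF := ⟨encodeMF, decodeMF, decodeMF_encodeMF⟩

theorem primrec_isSome_decodeMF : Primrec fun n => (decodeMF n).isSome := by
  let f : Alg Unit := ⟨fun _ => (), (), id, fun _ _ => (), fun _ _ => (), fun _ _ => (),
    fun _ _ => ()⟩
  have h := primrec_foldCode (f := fun _ : Unit => f) (.const ()) (.const ()) Primrec.snd
    (.const ()) (.const ()) (.const ()) (.const ())
  exact (Primrec.option_isSome.comp (h.comp (.const ()) .id)).of_eq fun n => by
    simp [foldCode_eq_map_decodeMF]

instance : Primcodable MF :=
  ⟨Primrec.nat_iff.1 <| (Primrec.ite (Primrec.eq.comp primrec_isSome_decodeMF (.const true))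
    Primrec.succ (.const 0)).of_eq fun n => by
      cases h : decodeMF n with
      | none => simp [h, Encodable.decode]
      | some A => simp [h, Encodable.decode, Encodable.encode, encodeMF_of_decodeMF_eq_some h]⟩

theorem primrec_decodeMF : Primrec decodeMF := Primrec.decode

theorem primrec_encodeMF : Primrec encodeMF := Primrec.encode

theorem MF.primrec_fold {α σ : Type*} [Primcodable α] [Primcodable σ] {f : α → Alg σ}
    (hvar : Primrec₂ fun a => (f a).var) (hbot : Primrec fun a => (f a).bot)
    (hneg : Primrec₂ fun a => (f a).neg)
    (hand : Primrec fun p : α × σ × σ => (f p.1).and p.2.1 p.2.2)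
    (hor : Primrec fun p : α × σ × σ => (f p.1).or p.2.1 p.2.2)
    (himp : Primrec fun p : α × σ × σ => (f p.1).imp p.2.1 p.2.2)
    (hbox : Primrec fun p : α × ℕ × σ => (f p.1).box p.2.1 p.2.2) :
    Primrec₂ fun a => fold (f a) :=
  Primrec₂.option_some_iff.1 <|
    ((primrec_foldCode hvar hbot hneg hand hor himp hbox).comp .fst
      (primrec_encodeMF.comp .snd)).of_eq fun _ => foldCode_encodeMF _ _

/-! ### Syntax and propositional tautologies -/

namespace MF

def vars : MF → List ℕ
  | var n => [n]
  | bot | box _ => []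
  | neg A => vars A
  | and A B | or A B | imp A B => vars A ++ vars B

def boxArgs : MF → List MF
  | var _ | bot => []
  | neg A => boxArgs A
  | and A B | or A B | imp A B => boxArgs A ++ boxArgs B
  | box A => [A]

def depth : MF → ℕ
  | var _ | bot => 0
  | neg A => depth A
  | and A B | or A B | imp A B => max (depth A) (depth B)
  | box A => depth A + 1

def atoms (A : MF) : List MF := (vars A).map var ++ (boxArgs A).map box

theorem depth_lt_of_mem_boxArgs {A B : MF} (h : B ∈ boxArgs A) : depth B < depth A := by
  induction A with
  | var _ | bot => simp [boxArgs] at h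
  | neg A ih => exact ih h
  | and A₁ A₂ ih₁ ih₂ | or A₁ A₂ ih₁ ih₂ | imp A₁ A₂ ih₁ ih₂ =>
    rcases List.mem_append.1 h with h | h
    exacts [lt_max_of_lt_left (ih₁ h), lt_max_of_lt_right (ih₂ h)]
  | box A => simp_all [boxArgs, depth]

theorem peval_congr {v w : MF → Bool} {A : MF} (hvar : ∀ n ∈ vars A, v (var n) = w (var n))
    (hbox : ∀ B ∈ boxArgs A, v B.box = w B.box) : A.peval v = A.peval w := by
  induction A <;> simp_all [peval, vars, boxArgs]

theorem peval_foldr_imp (v : MF → Bool) (Γ : List MF) (A : MF) :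
    (Γ.foldr imp A).peval v = true ↔ ((∀ γ ∈ Γ, γ.peval v = true) → A.peval v = true) := by
  induction Γ with
  | nil => simp
  | cons γ Γ ih => cases h : γ.peval v <;> simp [peval, h, ih]

theorem tautology_iff_forall_mem_sublists {A : MF} :
    A.Tautology ↔ ∀ s ∈ A.atoms.sublists, A.peval (fun a => decide (a ∈ s)) = true := by
  refine ⟨fun h s _ => h _, fun h v => ?_⟩
  rw [← h _ (List.mem_sublists.2 (List.filter_sublist (p := v)))]
  exact peval_congr (by simp_all [atoms]) (by simp_all [atoms])

theorem primrec_var : Primrec var :=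
  Primrec.encode_iff.1 <| (Primrec₂.natPair.comp (.const 0) .id).of_eq fun _ => rfl

theorem primrec_neg : Primrec neg :=
  Primrec.encode_iff.1 <| (Primrec₂.natPair.comp (.const 2) primrec_encodeMF).of_eq fun _ => rfl

theorem primrec_box : Primrec box :=
  Primrec.encode_iff.1 <| (Primrec₂.natPair.comp (.const 6) primrec_encodeMF).of_eq fun _ => rfl

theorem primrec_and : Primrec₂ and :=
  Primrec₂.encode_iff.1 <| (Primrec₂.natPair.comp (.const 3) (Primrec₂.natPair.comp
    (primrec_encodeMF.comp .fst) (primrec_encodeMF.comp .snd))).of_eq fun _ => rfl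

theorem primrec_imp : Primrec₂ imp :=
  Primrec₂.encode_iff.1 <| (Primrec₂.natPair.comp (.const 5) (Primrec₂.natPair.comp
    (primrec_encodeMF.comp .fst) (primrec_encodeMF.comp .snd))).of_eq fun _ => rfl

theorem primrec_iff : Primrec₂ MF.iff :=
  primrec_and.comp (primrec_imp.comp .fst .snd) (primrec_imp.comp .snd .fst)

theorem primrec_vars : Primrec vars := by
  have happ : Primrec fun p : Unit × List ℕ × List ℕ => p.2.1 ++ p.2.2 :=
    Primrec.list_append.comp (Primrec.fst.comp .snd) (Primrec.snd.comp .snd)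
  have h := primrec_fold (f := fun _ : Unit => ⟨fun n => [n], [], id, (· ++ ·), (· ++ ·),
      (· ++ ·), fun _ _ => []⟩)
    (Primrec.list_cons.comp .snd (.const [])).to₂ (.const []) Primrec.snd happ happ happ
    (.const [])
  exact (h.comp (.const ()) .id).of_eq fun A => by induction A <;> simp_all [fold, vars]

theorem primrec_boxArgs : Primrec boxArgs := by
  have happ : Primrec fun p : Unit × List MF × List MF => p.2.1 ++ p.2.2 :=
    Primrec.list_append.comp (Primrec.fst.comp .snd) (Primrec.snd.comp .snd)
  have h := primrec_fold (f := fun _ : Unit => ⟨fun _ => [], [], id, (· ++ ·), (· ++ ·),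
      (· ++ ·), fun c _ => (decodeMF c).toList⟩)
    (.const []) (.const []) Primrec.snd happ happ happ
    (Primrec.optionToList.comp (primrec_decodeMF.comp (Primrec.fst.comp .snd)))
  exact (h.comp (.const ()) .id).of_eq fun A => by
    induction A <;> simp_all [fold, boxArgs, decodeMF_encodeMF]

theorem primrec_depth : Primrec depth := by
  have hmax : Primrec fun p : Unit × ℕ × ℕ => max p.2.1 p.2.2 :=
    Primrec.nat_max.comp (Primrec.fst.comp .snd) (Primrec.snd.comp .snd)
  have h := primrec_fold (f := fun _ : Unit => ⟨fun _ => 0, 0, id, max, max, max,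
      fun _ d => d + 1⟩)
    (.const 0) (.const 0) Primrec.snd hmax hmax hmax (Primrec.succ.comp (Primrec.snd.comp .snd))
  exact (h.comp (.const ()) .id).of_eq fun A => by induction A <;> simp_all [fold, depth]

theorem primrec_atoms : Primrec atoms :=
  Primrec.list_append.comp (Primrec.list_map primrec_vars (primrec_var.comp .snd).to₂)
    (Primrec.list_map primrec_boxArgs (primrec_box.comp .snd).to₂)

theorem primrec_peval_mem : Primrec₂ fun (s : List MF) (A : MF) => A.peval (· ∈ s) := by
  have h := primrec_fold (f := fun s : List MF => ⟨fun n => decide (var n ∈ s), false,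
      Bool.not, Bool.and, Bool.or, fun a b => !a || b,
      fun c _ => decide (((decodeMF c).getD bot).box ∈ s)⟩)
    (PrimrecRel.mem.decide.comp (primrec_var.comp .snd) .fst).to₂
    (.const false) (Primrec.dom_bool Bool.not |>.comp .snd |>.to₂)
    ((Primrec.dom_bool₂ Bool.and).comp (Primrec.fst.comp .snd) (Primrec.snd.comp .snd))
    ((Primrec.dom_bool₂ Bool.or).comp (Primrec.fst.comp .snd) (Primrec.snd.comp .snd))
    ((Primrec.dom_bool₂ fun a b => !a || b).comp (Primrec.fst.comp .snd) (Primrec.snd.comp .snd))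
    (PrimrecRel.mem.decide.comp (primrec_box.comp (Primrec.option_getD.comp
      (primrec_decodeMF.comp (Primrec.fst.comp .snd)) (.const bot))) .fst)
  exact h.of_eq fun s A => by induction A <;> simp_all [fold, peval, decodeMF_encodeMF]

theorem primrecPred_tautology : PrimrecPred Tautology :=
  ((PrimrecRel.forall_mem_list (PrimrecRel.comp₂ Primrec.eq primrec_peval_mem
    (Primrec₂.const true))).comp (Primrec.list_sublists.comp primrec_atoms) .id).of_eq
    fun _ => tautology_iff_forall_mem_sublists.symm

def collapse : MF → Bool
  | var _ | bot => false
  | neg A => !A.collapse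
  | and A B => A.collapse && B.collapse
  | or A B => A.collapse || B.collapse
  | imp A B => !A.collapse || B.collapse
  | box A => A.collapse

theorem peval_collapse (A : MF) : A.peval collapse = A.collapse := by
  induction A <;> simp_all [peval, collapse]

end MF

/-! ### Derived rules and valuations respecting END -/

namespace END

theorem of_entails {Γ : List MF} {A : MF} (hΓ : ∀ γ ∈ Γ, END γ)
    (h : ∀ v, (∀ γ ∈ Γ, γ.peval v = true) → A.peval v = true) : END A := by
  induction Γ generalizing A with
  | nil => exact taut fun v => h v (by simp)
  | cons γ Γ ih =>
    refine mp (A := γ) (ih (fun δ hδ => hΓ δ (by simp [hδ])) fun v hv => ?_) (hΓ γ (by simp))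
    cases hγ : γ.peval v <;> simp_all [MF.peval]

theorem of_entails₂ {B C A : MF} (hB : END B) (hC : END C)
    (h : ∀ v, B.peval v = true → C.peval v = true → A.peval v = true) : END A :=
  of_entails (Γ := [B, C]) (by simp [hB, hC]) fun v hv => h v (hv B (by simp)) (hv C (by simp))

theorem collapse_eq_true {A : MF} (h : END A) : A.collapse = true := by
  induction h with
  | taut h => simpa [MF.peval_collapse] using h MF.collapse
  | axD => simp [MF.collapse]
  | mp _ _ ih₁ ih₂ => simp_all [MF.collapse]
  | nec _ ih => exact ih
  | re _ ih => exact ih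

theorem not_bot : ¬ END .bot := fun h => by simpa [MF.collapse] using collapse_eq_true h

theorem false_of_neg {B : MF} (h : END B) (hn : END B.neg) : False :=
  not_bot <| of_entails₂ h hn fun v => by simp [MF.peval]

theorem iff_symm {B C : MF} (h : END (B.iff C)) : END (C.iff B) :=
  of_entails (Γ := [B.iff C]) (by simp [h]) fun v => by simp [MF.peval, MF.iff]; grind

theorem mp_iff {B C : MF} (h : END (B.iff C)) (hB : END B) : END C :=
  of_entails₂ h hB fun v => by simp [MF.peval, MF.iff]; grind

theorem neg_box {B : MF} (h : END B.neg) : END B.box.neg :=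
  of_entails₂ (axD (A := B)) (nec h) fun v => by simp [MF.peval]; grind

theorem not_box_and_box {B C : MF} (h : END (B.iff C.neg)) : END (B.box.and C.box).neg :=
  of_entails₂ (re h) (axD (A := C)) fun v => by simp [MF.peval, MF.iff]; grind

structure Respects (v : MF → Bool) (S : Set MF) : Prop where
  re : ∀ B ∈ S, ∀ C ∈ S, END (B.iff C) → v B.box = v C.box
  nec : ∀ B ∈ S, END B → v B.box = true
  nec_neg : ∀ B ∈ S, END B.neg → v B.box = false
  d : ∀ B ∈ S, ∀ C ∈ S, END (B.iff C.neg) → v B.box = true → v C.box = false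

theorem peval_eq_true {A : MF} (h : END A) {v : MF → Bool} (hv : Respects v Set.univ) :
    A.peval v = true := by
  induction h with
  | taut h => exact h v
  | @axD A =>
    have hd := hv.d A trivial A.neg trivial (taut fun w => by simp [MF.peval, MF.iff])
    cases h : v A.box <;> simp_all [MF.peval]
  | mp _ _ ih₁ ih₂ => simp_all [MF.peval]
  | nec h => exact hv.nec _ trivial h
  | re h => simp [MF.peval, MF.iff, hv.re _ trivial _ trivial h]

open Classical in
noncomputable def extendVal (S : Set MF) (v : MF → Bool) : MF → Bool
  | .box B => decide ((∃ C ∈ S, END (B.iff C) ∧ v C.box = true) ∨ END B)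
  | a => v a

section extendVal

variable {S : Set MF} {v : MF → Bool}

theorem extendVal_box (B : MF) : extendVal S v B.box = true ↔
    (∃ C ∈ S, END (B.iff C) ∧ v C.box = true) ∨ END B := by
  simp [extendVal]

theorem extendVal_box_of_mem (hv : Respects v S) {B : MF} (hB : B ∈ S) :
    extendVal S v B.box = v B.box := by
  rw [Bool.eq_iff_iff, extendVal_box]
  constructor
  · rintro (⟨C, hC, hBC, hvC⟩ | hB')
    · rwa [hv.re B hB C hC hBC]
    · exact hv.nec B hB hB'
  · exact fun h => Or.inl ⟨B, hB, taut fun w => by simp [MF.peval, MF.iff], h⟩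

theorem extendVal_box_of_iff {B B' : MF} (h : END (B.iff B'))
    (hB : extendVal S v B.box = true) : extendVal S v B'.box = true := by
  rw [extendVal_box] at hB ⊢
  rcases hB with ⟨C, hC, hBC, hvC⟩ | hB
  · exact Or.inl ⟨C, hC, of_entails₂ h hBC fun w => by simp [MF.peval, MF.iff]; grind, hvC⟩
  · exact Or.inr (mp_iff h hB)

theorem extendVal_box_of_neg (hv : Respects v S) {B : MF} (h : END B.neg) :
    extendVal S v B.box = false := by
  rw [Bool.eq_false_iff, ne_eq, extendVal_box]
  rintro (⟨C, hC, hBC, hvC⟩ | hB)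
  · have hC' : END C.neg := of_entails₂ hBC h fun w => by simp [MF.peval, MF.iff]; grind
    simp [hv.nec_neg C hC hC'] at hvC
  · exact false_of_neg hB h

theorem respects_extendVal (hv : Respects v S) : Respects (extendVal S v) Set.univ where
  re _ _ _ _ h := Bool.eq_iff_iff.2 ⟨extendVal_box_of_iff h, extendVal_box_of_iff (iff_symm h)⟩
  nec B _ h := (extendVal_box B).2 (Or.inr h)
  nec_neg _ _ h := extendVal_box_of_neg hv h
  d B _ C _ h hB := by
    by_contra hC
    rw [Bool.not_eq_false] at hC
    rcases (extendVal_box B).1 hB with ⟨B', hB'S, hBB', hvB'⟩ | hBp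
    · rcases (extendVal_box C).1 hC with ⟨C', hC'S, hCC', hvC'⟩ | hCp
      · have hB'C' : END (B'.iff C'.neg) :=
          of_entails (Γ := [B.iff B', C.iff C', B.iff C.neg]) (by simp [*])
            fun w => by simp [MF.peval, MF.iff]; grind
        simp [hv.d B' hB'S C' hC'S hB'C' hvB'] at hvC'
      · have := extendVal_box_of_neg hv (B := B) (of_entails₂ h hCp fun w => by
          simp [MF.peval, MF.iff]; grind)
        simp_all
    · have := extendVal_box_of_neg hv (B := C) (of_entails₂ h hBp fun w => by
        simp [MF.peval, MF.iff]; grind)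
      simp_all

theorem peval_extendVal (hv : Respects v S) {A : MF} (hA : ∀ B ∈ A.boxArgs, B ∈ S) :
    A.peval (extendVal S v) = A.peval v :=
  peval_congr (fun _ _ => rfl) fun B hB => extendVal_box_of_mem hv (hA B hB)

end extendVal

end END

/-! ### Reduction to lower modal depth -/

namespace MF

/-- Pairs `(q, γ)` with `γ` derivable from `q` by one rule of END: the only facts about
provability that the boxes of `A` depend on. -/
def obligations (A : MF) : List (MF × MF) :=
  A.boxArgs.flatMap fun B => A.boxArgs.flatMap fun C =>
    [(B, B.box), (B.neg, B.box.neg), (B.iff C, B.box.iff C.box),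
      (B.iff C.neg, (B.box.and C.box).neg)]

def constraints (o : MF → Bool) (A : MF) : List MF :=
  A.obligations.filterMap fun p => if o p.1 then some p.2 else none

variable {A : MF} {p : MF × MF}

theorem depth_lt_of_mem_obligations (h : p ∈ A.obligations) : p.1.depth < A.depth := by
  simp only [obligations, List.mem_flatMap, List.mem_cons, List.not_mem_nil, or_false] at h
  obtain ⟨B, hB, C, hC, rfl | rfl | rfl | rfl⟩ := h <;>
    have := depth_lt_of_mem_boxArgs hB <;> have := depth_lt_of_mem_boxArgs hC <;>
    simp only [MF.iff, depth] <;> omega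

theorem END_of_mem_obligations (h : p ∈ A.obligations) (hp : END p.1) : END p.2 := by
  simp only [obligations, List.mem_flatMap, List.mem_cons, List.not_mem_nil, or_false] at h
  obtain ⟨B, -, C, -, rfl | rfl | rfl | rfl⟩ := h
  exacts [END.nec hp, END.neg_box hp, END.re hp, END.not_box_and_box hp]

theorem respects_of_obligations {v : MF → Bool}
    (h : ∀ p ∈ A.obligations, END p.1 → p.2.peval v = true) :
    END.Respects v {B | B ∈ A.boxArgs} := by
  have mem : ∀ {B C}, B ∈ A.boxArgs → C ∈ A.boxArgs → ∀ q γ,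
      (q, γ) ∈ [(B, B.box), (B.neg, B.box.neg), (B.iff C, B.box.iff C.box),
        (B.iff C.neg, (B.box.and C.box).neg)] → END q → γ.peval v = true :=
    fun hB hC _ _ hq => h _ (List.mem_flatMap.2 ⟨_, hB, List.mem_flatMap.2 ⟨_, hC, hq⟩⟩)
  refine ⟨fun B hB C hC hq => ?_, fun B hB hq => ?_, fun B hB hq => ?_, fun B hB C hC hq => ?_⟩
  · have := mem hB hC _ (B.box.iff C.box) (by simp) hq
    simp only [peval, MF.iff] at this
    grind
  · exact mem hB hB _ B.box (by simp) hq
  · simpa [peval] using mem hB hB _ B.box.neg (by simp) hq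
  · have := mem hB hC _ (B.box.and C.box).neg (by simp) hq
    simp only [peval] at this
    grind

theorem END_iff_tautology {o : MF → Bool} (ho : ∀ p ∈ A.obligations, o p.1 = true ↔ END p.1) :
    END A ↔ ((constraints o A).foldr imp A).Tautology := by
  constructor
  · intro hA v
    rw [peval_foldr_imp]
    intro hv
    have hresp : END.Respects v {B | B ∈ A.boxArgs} := respects_of_obligations fun p hp hq =>
      hv p.2 (List.mem_filterMap.2 ⟨p, hp, by simp [(ho p hp).2 hq]⟩)
    rw [← END.peval_extendVal hresp fun _ => id]
    exact hA.peval_eq_true (END.respects_extendVal hresp)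
  · refine fun h => END.of_entails (fun γ hγ => ?_) fun v => (peval_foldr_imp v _ _).1 (h v)
    obtain ⟨p, hp, hγ⟩ := List.mem_filterMap.1 hγ
    split_ifs at hγ with hop
    cases hγ
    exact END_of_mem_obligations hp ((ho p hp).1 hop)

theorem primrec_obligations : Primrec obligations := by
  have hB : Primrec fun x : (MF × MF) × MF => x.1.2 := Primrec.snd.comp .fst
  have hC : Primrec fun x : (MF × MF) × MF => x.2 := Primrec.snd
  have h : Primrec fun x : (MF × MF) × MF => [(x.1.2, x.1.2.box), (x.1.2.neg, x.1.2.box.neg),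
      (x.1.2.iff x.2, x.1.2.box.iff x.2.box),
      (x.1.2.iff x.2.neg, (x.1.2.box.and x.2.box).neg)] :=
    Primrec.list_cons.comp (Primrec.pair hB (primrec_box.comp hB)) <|
    Primrec.list_cons.comp (Primrec.pair (primrec_neg.comp hB)
      (primrec_neg.comp (primrec_box.comp hB))) <|
    Primrec.list_cons.comp (Primrec.pair (primrec_iff.comp hB hC)
      (primrec_iff.comp (primrec_box.comp hB) (primrec_box.comp hC))) <|
    Primrec.list_cons.comp (Primrec.pair (primrec_iff.comp hB (primrec_neg.comp hC))
      (primrec_neg.comp (primrec_and.comp (primrec_box.comp hB) (primrec_box.comp hC))))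
      (.const [])
  exact Primrec.list_flatMap primrec_boxArgs
    (Primrec.list_flatMap (primrec_boxArgs.comp .fst) h.to₂).to₂

/-- `bs` lists the answers to the premises of `A.obligations` in order, as supplied to the
recursion step by `Primrec.nat_omega_rec'`. -/
def constraintsOfAnswers (A : MF) (bs : List Bool) : List MF :=
  constraints (fun q => bs.getD ((A.obligations.map Prod.fst).idxOf q) false) A

theorem primrec_constraintsOfAnswers : Primrec₂ constraintsOfAnswers := by
  have hq : Primrec fun A : MF => A.obligations.map Prod.fst :=
    Primrec.list_map primrec_obligations (Primrec.fst.comp .snd).to₂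
  have ho : Primrec fun x : (MF × List Bool) × (MF × MF) =>
      x.1.2.getD ((x.1.1.obligations.map Prod.fst).idxOf x.2.1) false :=
    (Primrec.list_getD false).comp (Primrec.snd.comp .fst)
      (Primrec.list_idxOf.comp (Primrec.fst.comp .snd) (hq.comp (Primrec.fst.comp .fst)))
  have hg : Primrec₂ fun (x : MF × List Bool) (p : MF × MF) =>
      if x.2.getD ((x.1.obligations.map Prod.fst).idxOf p.1) false = true then some p.2
      else none :=
    Primrec.ite (Primrec.eq.comp ho (.const true))
      (Primrec.option_some.comp (Primrec.snd.comp .snd)) (.const none)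
  exact Primrec.listFilterMap (primrec_obligations.comp .fst) hg

end MF

theorem primrecPred_END : PrimrecPred END := by
  classical
  refine ⟨inferInstance, Primrec.nat_omega_rec' (fun A => decide (END A)) primrec_depth
    (Primrec.list_map primrec_obligations (Primrec.fst.comp .snd).to₂)
    (g := fun A bs => some (decide ((constraintsOfAnswers A bs).foldr imp A).Tautology))
    ?_ (fun A q hq => ?_) (fun A => ?_)⟩
  · exact Primrec.option_some.comp <| primrecPred_tautology.decide.comp <|
      Primrec.list_foldr primrec_constraintsOfAnswers .fst
        (primrec_imp.comp (Primrec.fst.comp .snd) (Primrec.snd.comp .snd)).to₂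
  · obtain ⟨p, hp, rfl⟩ := List.mem_map.1 hq
    exact depth_lt_of_mem_obligations hp
  · refine congrArg some (decide_eq_decide.2 (END_iff_tautology fun p hp => ?_).symm)
    rw [List.getD_map_idxOf _ (List.mem_map_of_mem hp), decide_eq_true_iff]

/-- Decidability of END: the set of Gödel numbers of END-derivable formulas
is a decidable (computable) predicate. -/
theorem END_decidable :
    ComputablePred (fun n : ℕ => ∃ A : MF, encodeMF A = n ∧ END A) := by
  classical
  refine (PrimrecPred.computablePred
    (p := fun n => ((decodeMF n).map fun A => decide (END A)).getD false = true) ?_).of_eq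
    fun n => ?_
  · exact Primrec.eq.comp (Primrec.option_getD.comp (Primrec.option_map primrec_decodeMF
      (primrecPred_END.decide.comp .snd).to₂) (.const false)) (.const true)
  · cases h : decodeMF n with
    | none => simpa [h] using fun A hA => by simp [← hA, decodeMF_encodeMF] at h
    | some A => simp [← encodeMF_of_decodeMF_eq_some h, encodeMF_injective.eq_iff]
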